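/- arXiv:2111.10532 — 2 statements merged into one kernel-verified Lean document; each statement's English description precedes it below -/
import Mathlib

section
/- Let Γ ⊆ ℝ^m be a nonempty set, K an index set, η : K × ℝ^m → ℝ a function, and s : ℝ^m → ℝ. Define ψ(κ) = inf_{x ∈ Γ} (η(κ,x) − s(x)), and suppose the infimum is attained: for each κ ∈ K there exists x_max(κ) ∈ Γ with ψ(κ) = η(κ, x_max(κ)) − s(x_max(κ)). If x_max : K → Γ is surjective, then for every x ∈ Γ, s(x) = inf_{κ ∈ K} (η(κ,x) − ψ(κ)). -/
/-- Generalized Legendre–Fenchel inversion for squeezed ensembles: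
if ψ(κ) = inf_{x ∈ Γ} (η(κ,x) − s(x)) is attained at x_max(κ) ∈ Γ and
x_max is surjective onto Γ, then s(x) = inf_{κ ∈ K} (η(κ,x) − ψ(κ)) for all x ∈ Γ. -/
theorem stmt0 {m : ℕ} {K : Type*}
    (Γ : Set (Fin m → ℝ)) (hΓ : Γ.Nonempty)
    (η : K → (Fin m → ℝ) → ℝ) (s : (Fin m → ℝ) → ℝ)
    (ψ : K → ℝ) (xmax : K → (Fin m → ℝ))
    (hmem : ∀ κ, xmax κ ∈ Γ)
    (hlb : ∀ κ, ∀ x ∈ Γ, ψ κ ≤ η κ x - s x)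
    (hatt : ∀ κ, ψ κ = η κ (xmax κ) - s (xmax κ))
    (hsurj : ∀ x ∈ Γ, ∃ κ, xmax κ = x) :
    ∀ x ∈ Γ, s x = sInf (Set.range fun κ => η κ x - ψ κ) := by
  intro x hx
  obtain ⟨κ₀, hκ₀⟩ := hsurj x hx
  have hlow : ∀ y ∈ Set.range (fun κ => η κ x - ψ κ), s x ≤ y := by
    rintro y ⟨κ, rfl⟩
    simp only
    have := hlb κ x hx
    linarith
  have hmemr : η κ₀ x - ψ κ₀ ∈ Set.range fun κ => η κ x - ψ κ := ⟨κ₀, rfl⟩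
  have heq : η κ₀ x - ψ κ₀ = s x := by
    have := hatt κ₀
    rw [hκ₀] at this
    linarith
  apply le_antisymm
  · exact le_csInf ⟨_, hmemr⟩ hlow
  · rw [← heq]
    exact csInf_le ⟨s x, hlow⟩ hmemr
end

section
/- Let G be a Hermitian matrix, ρ = e^{-G}/Tr e^{-G}, and define ⟨A;B⟩ = ∫₀¹ Tr[e^{νG} A† e^{-νG} B ρ] dν and ⟨X⟩ = Tr[Xρ]. Then for any matrix A, ⟨A;A⟩ ≤ (1/2)⟨{A†, A}⟩, where {X,Y} = XY + YX is the anticommutator. -/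
/-!
Diagonalize `G = U diag(λ) U*` and put `B = U* A U`, `μ = -λ`. In the eigenbasis of `G` the
Duhamel integrand becomes `F ν = Z⁻¹ ∑ᵢⱼ |Bⱼᵢ|² exp((1 - ν) μᵢ + ν μⱼ)` with `Z = ∑ᵢ exp μᵢ`,
and its endpoint values `F 0`, `F 1` are the expectations of `A†A` and `AA†` in the Gibbs state.
Each exponential is convex along the segment from `μᵢ` to `μⱼ`, so `F ν + F (1 - ν) ≤ F 0 + F 1`,
and integrating this symmetrized bound over `[0, 1]` gives `∫₀¹ F ≤ (F 0 + F 1) / 2`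
(the Hermite–Hadamard inequality).
-/

open NormedSpace Matrix

/-- The Bogoliubov–Duhamel inner product
⟨A;B⟩ = ∫₀¹ Tr[e^{νG} A† e^{-νG} B ρ] dν with ρ = e^{-G}/Tr e^{-G}. -/
noncomputable def BDinner {n : Type*} [Fintype n] [DecidableEq n]
    (G : Matrix n n ℂ) (A B : Matrix n n ℂ) : ℂ :=
  ∫ ν in (0:ℝ)..1,
    Matrix.trace (exp ((ν : ℂ) • G) * Aᴴ * exp (-((ν : ℂ) • G)) * B *
      ((Matrix.trace (exp (-G)))⁻¹ • exp (-G)))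

theorem ConvexOn.map_add_map_swap_le {𝕜 E β : Type*} [Ring 𝕜] [PartialOrder 𝕜]
    [IsOrderedRing 𝕜] [AddCommMonoid E] [Module 𝕜 E] [AddCommMonoid β] [PartialOrder β]
    [IsOrderedAddMonoid β] [Module 𝕜 β] {s : Set E} {f : E → β} (hf : ConvexOn 𝕜 s f)
    {x y : E} (hx : x ∈ s) (hy : y ∈ s) {t : 𝕜} (ht₀ : 0 ≤ t) (ht₁ : t ≤ 1) :
    f ((1 - t) • x + t • y) + f (t • x + (1 - t) • y) ≤ f x + f y := by
  have h₁ := hf.2 hx hy (sub_nonneg.2 ht₁) ht₀ (sub_add_cancel 1 t)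
  have h₂ := hf.2 hx hy ht₀ (sub_nonneg.2 ht₁) (add_sub_cancel t 1)
  calc f ((1 - t) • x + t • y) + f (t • x + (1 - t) • y)
      ≤ ((1 - t) • f x + t • f y) + (t • f x + (1 - t) • f y) := add_le_add h₁ h₂
    _ = f x + f y := by
      rw [add_add_add_comm, ← add_smul, ← add_smul, sub_add_cancel, add_sub_cancel,
        one_smul, one_smul]

theorem intervalIntegral.integral_le_of_add_reflect_le_add {f : ℝ → ℝ} {a b : ℝ}
    (hab : a ≤ b) (hf : IntervalIntegrable f MeasureTheory.volume a b)
    (h : ∀ x ∈ Set.Icc a b, f x + f (a + b - x) ≤ f a + f b) :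
    ∫ x in a..b, f x ≤ (b - a) * ((f a + f b) / 2) := by
  have hreflect : ∫ x in a..b, f (a + b - x) = ∫ x in a..b, f x := by
    rw [intervalIntegral.integral_comp_sub_left, add_sub_cancel_right, add_sub_cancel_left]
  have hf' : IntervalIntegrable (fun x => f (a + b - x)) MeasureTheory.volume a b := by
    simpa using (hf.comp_sub_left (a + b)).symm
  have hsum : ∫ x in a..b, (f x + f (a + b - x)) ≤ ∫ x in a..b, (f a + f b) :=
    intervalIntegral.integral_mono_on hab (hf.add hf') intervalIntegrable_const h
  rw [intervalIntegral.integral_add hf hf', hreflect, intervalIntegral.integral_const,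
    smul_eq_mul] at hsum
  linarith

namespace Matrix

variable {n R : Type*} [Fintype n] [DecidableEq n]

theorem trace_conjStarAlgAut [CommRing R] [StarRing R] (u : unitary (Matrix n n R))
    (X : Matrix n n R) : trace (Unitary.conjStarAlgAut R _ u X) = trace X := by
  rw [Unitary.conjStarAlgAut_apply, trace_mul_cycle, Unitary.coe_star_mul_self, one_mul]

theorem trace_diagonal_mul_conjTranspose_mul_diagonal_mul_mul_diagonal (d₁ d₂ d₃ : n → ℂ)
    (B : Matrix n n ℂ) :
    trace (diagonal d₁ * Bᴴ * diagonal d₂ * B * diagonal d₃) =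
      ∑ i, ∑ j, d₁ i * d₂ j * d₃ i * Complex.normSq (B j i) := by
  refine Finset.sum_congr rfl fun i _ => ?_
  rw [diag_apply, mul_diagonal, mul_apply, Finset.sum_mul]
  refine Finset.sum_congr rfl fun j _ => ?_
  rw [mul_diagonal, diagonal_mul, conjTranspose_apply, Complex.normSq_eq_conj_mul_self]
  simp only [RCLike.star_def]
  ring

namespace IsHermitian

variable {G : Matrix n n ℂ} (hG : G.IsHermitian)

theorem exp_smul_eq_conjStarAlgAut (c : ℂ) :
    NormedSpace.exp (c • G) = Unitary.conjStarAlgAut ℂ _ hG.eigenvectorUnitary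
      (diagonal fun i => Complex.exp (c * hG.eigenvalues i)) := by
  have hconj (X : Matrix n n ℂ) :
      NormedSpace.exp (Unitary.conjStarAlgAut ℂ _ hG.eigenvectorUnitary X) =
        Unitary.conjStarAlgAut ℂ _ hG.eigenvectorUnitary (NormedSpace.exp X) :=
    Matrix.exp_units_conj (Unitary.toUnits hG.eigenvectorUnitary) X
  conv_lhs => rw [hG.spectral_theorem]
  rw [← map_smul, hconj, ← diagonal_smul, exp_diagonal]
  congr 2
  funext i
  simp [Complex.exp_eq_exp_ℂ]

theorem trace_exp_smul (c : ℂ) :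
    trace (NormedSpace.exp (c • G)) = ∑ i, Complex.exp (c * hG.eigenvalues i) := by
  rw [hG.exp_smul_eq_conjStarAlgAut, trace_conjStarAlgAut, trace_diagonal]

theorem trace_exp_smul_mul_conjTranspose_mul_exp_smul_mul_mul_exp_smul (a b c : ℂ)
    (A : Matrix n n ℂ) :
    trace (NormedSpace.exp (a • G) * Aᴴ * NormedSpace.exp (b • G) * A *
        NormedSpace.exp (c • G)) =
      ∑ i, ∑ j, Complex.exp ((a + c) * hG.eigenvalues i + b * hG.eigenvalues j) *
        Complex.normSq ((star (hG.eigenvectorUnitary : Matrix n n ℂ) * A *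
          hG.eigenvectorUnitary) j i) := by
  set ψ := Unitary.conjStarAlgAut ℂ (Matrix n n ℂ) hG.eigenvectorUnitary
  obtain ⟨B, rfl⟩ : ∃ B, A = ψ B := ⟨ψ.symm A, (ψ.apply_symm_apply A).symm⟩
  have hB : star (hG.eigenvectorUnitary : Matrix n n ℂ) * ψ B * hG.eigenvectorUnitary = B :=
    ψ.symm_apply_apply B
  rw [hB, hG.exp_smul_eq_conjStarAlgAut, hG.exp_smul_eq_conjStarAlgAut,
    hG.exp_smul_eq_conjStarAlgAut, ← star_eq_conjTranspose, ← map_star, ← map_mul, ← map_mul,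
    ← map_mul, ← map_mul, trace_conjStarAlgAut, star_eq_conjTranspose,
    trace_diagonal_mul_conjTranspose_mul_diagonal_mul_mul_diagonal]
  refine Finset.sum_congr rfl fun i _ => Finset.sum_congr rfl fun j _ => ?_
  rw [← Complex.exp_add, ← Complex.exp_add]
  ring_nf

noncomputable def duhamelIntegrand (A : Matrix n n ℂ) (ν : ℝ) : ℝ :=
  (∑ i, Real.exp (-hG.eigenvalues i))⁻¹ * ∑ i, ∑ j,
    Complex.normSq ((star (hG.eigenvectorUnitary : Matrix n n ℂ) * A *
      hG.eigenvectorUnitary) j i) *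
      Real.exp ((1 - ν) * -hG.eigenvalues i + ν * -hG.eigenvalues j)

theorem trace_mul_smul_exp_neg (M : Matrix n n ℂ) :
    trace (M * ((trace (NormedSpace.exp (-G)))⁻¹ • NormedSpace.exp (-G))) =
      ((∑ i, Real.exp (-hG.eigenvalues i) : ℝ) : ℂ)⁻¹ *
        trace (M * NormedSpace.exp ((-1 : ℂ) • G)) := by
  rw [Matrix.mul_smul, trace_smul, smul_eq_mul, ← neg_one_smul ℂ G, hG.trace_exp_smul]
  push_cast [Complex.ofReal_exp]
  simp

theorem BDinner_self_eq_integral_duhamelIntegrand (A : Matrix n n ℂ) :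
    BDinner G A A = ((∫ ν in (0 : ℝ)..1, hG.duhamelIntegrand A ν : ℝ) : ℂ) := by
  rw [BDinner, ← intervalIntegral.integral_ofReal]
  refine intervalIntegral.integral_congr fun ν _ => ?_
  rw [hG.trace_mul_smul_exp_neg, ← neg_smul,
    hG.trace_exp_smul_mul_conjTranspose_mul_exp_smul_mul_mul_exp_smul, duhamelIntegrand]
  push_cast [Complex.ofReal_exp]
  congr 1
  refine Finset.sum_congr rfl fun i _ => Finset.sum_congr rfl fun j _ => ?_
  rw [mul_comm]
  ring_nf

theorem trace_anticommutator_mul_smul_exp_neg (A : Matrix n n ℂ) :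
    trace ((Aᴴ * A + A * Aᴴ) * ((trace (NormedSpace.exp (-G)))⁻¹ • NormedSpace.exp (-G))) =
      ((hG.duhamelIntegrand A 0 + hG.duhamelIntegrand A 1 : ℝ) : ℂ) := by
  have h₁ := hG.trace_exp_smul_mul_conjTranspose_mul_exp_smul_mul_mul_exp_smul 0 0 (-1) A
  have h₂ := hG.trace_exp_smul_mul_conjTranspose_mul_exp_smul_mul_mul_exp_smul 0 (-1) 0 A
  simp only [zero_smul, NormedSpace.exp_zero, Matrix.one_mul, Matrix.mul_one] at h₁ h₂
  rw [hG.trace_mul_smul_exp_neg, add_mul, trace_add, Matrix.mul_assoc A, trace_mul_comm A, h₁, h₂,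
    duhamelIntegrand, duhamelIntegrand]
  push_cast [Complex.ofReal_exp]
  rw [mul_add]
  congr 2 <;> refine Finset.sum_congr rfl fun i _ => Finset.sum_congr rfl fun j _ => ?_ <;>
    ring_nf

theorem duhamelIntegrand_add_duhamelIntegrand_one_sub_le (A : Matrix n n ℂ) {ν : ℝ}
    (hν₀ : 0 ≤ ν) (hν₁ : ν ≤ 1) :
    hG.duhamelIntegrand A ν + hG.duhamelIntegrand A (1 - ν) ≤
      hG.duhamelIntegrand A 0 + hG.duhamelIntegrand A 1 := by
  simp only [duhamelIntegrand, sub_sub_cancel, sub_zero, sub_self, one_mul, zero_mul, add_zero,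
    zero_add, ← mul_add, ← Finset.sum_add_distrib]
  refine mul_le_mul_of_nonneg_left (Finset.sum_le_sum fun i _ => Finset.sum_le_sum
    fun j _ => mul_le_mul_of_nonneg_left ?_ (Complex.normSq_nonneg _))
    (inv_nonneg.2 (Finset.sum_nonneg fun i _ => (Real.exp_pos _).le))
  exact convexOn_exp.map_add_map_swap_le (Set.mem_univ _) (Set.mem_univ _) hν₀ hν₁

theorem continuous_duhamelIntegrand (A : Matrix n n ℂ) : Continuous (hG.duhamelIntegrand A) := by
  unfold duhamelIntegrand
  fun_prop

end IsHermitian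

end Matrix

theorem stmt11_general {n : Type*} [Fintype n] [DecidableEq n]
    (G : Matrix n n ℂ) (hG : G.IsHermitian) (A : Matrix n n ℂ) :
    (BDinner G A A).re ≤ (1 / 2) *
      (Matrix.trace ((Aᴴ * A + A * Aᴴ) *
        ((Matrix.trace (exp (-G)))⁻¹ • exp (-G)))).re := by
  rw [hG.BDinner_self_eq_integral_duhamelIntegrand, hG.trace_anticommutator_mul_smul_exp_neg,
    Complex.ofReal_re, Complex.ofReal_re]
  have hmean := intervalIntegral.integral_le_of_add_reflect_le_add zero_le_one
    ((hG.continuous_duhamelIntegrand A).intervalIntegrable 0 1)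
    fun ν hν => by simpa using hG.duhamelIntegrand_add_duhamelIntegrand_one_sub_le A hν.1 hν.2
  linarith

/-- Brooks Harris inequality: ⟨A;A⟩ ≤ (1/2)⟨{A†,A}⟩ in the Gibbs state
ρ = e^{-G}/Tr e^{-G}. -/
theorem stmt11 {n : Type*} [Fintype n] [DecidableEq n] [Nonempty n]
    (G : Matrix n n ℂ) (hG : G.IsHermitian) (A : Matrix n n ℂ) :
    (BDinner G A A).re ≤ (1 / 2) *
      (Matrix.trace ((Aᴴ * A + A * Aᴴ) *
        ((Matrix.trace (exp (-G)))⁻¹ • exp (-G)))).re :=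
  stmt11_general G hG A
end
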